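/- arXiv:2108.07850 — 3 statements merged into one kernel-verified Lean document; each statement's English description precedes it below -/
import Mathlib

section
/- A saturated coideal J of a graded graph is primitive if and only if J is upward directed: for any two vertices λ_1, λ_2 ∈ J there exists a vertex μ ∈ J with μ ≥ λ_1 and μ ≥ λ_2. -/
open Filter Topology ENNReal
open scoped Classical

noncomputable section

structure GradedGraph where
  V : Type
  lvl : V → ℕ
  levelFinite : ∀ n : ℕ, {v : V | lvl v = n}.Finite
  k : V → V → ℝ
  k_nonneg : ∀ a b, 0 ≤ k a b
  k_grade : ∀ a b, k a b ≠ 0 → lvl b = lvl a + 1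
  exists_up : ∀ a, ∃ b, 0 < k a b

namespace GradedGraph

variable (G : GradedGraph)

/-- The edge relation `λ ↗ μ`. -/
def Adj (a b : G.V) : Prop := 0 < G.k a b

/-- The path order: `a ≤ b` iff there is a (possibly empty) path from `a` to `b`. -/
def Le : G.V → G.V → Prop := Relation.ReflTransGen G.Adj

/-- `dimAux n a b` : weighted number of paths of length `n` from `a` to `b`. -/
def dimAux : ℕ → G.V → G.V → ℝ
  | 0, a, b => if a = b then 1 else 0
  | n + 1, a, b => ∑ᶠ c, dimAux n a c * G.k c b

/-- The shifted dimension `dim(a,b)`: weighted number of paths from `a` to `b`. -/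
def dim (a b : G.V) : ℝ := G.dimAux (G.lvl b - G.lvl a) a b

def IsIdeal (I : Set G.V) : Prop := ∀ a ∈ I, ∀ b, G.Le a b → b ∈ I

def IsCoideal (J : Set G.V) : Prop := ∀ a ∈ J, ∀ b, G.Le b a → b ∈ J

def IsSaturatedIdeal (I : Set G.V) : Prop :=
  G.IsIdeal I ∧ ∀ a, (∀ b, G.Adj a b → b ∈ I) → a ∈ I

def IsSaturatedCoideal (J : Set G.V) : Prop :=
  G.IsCoideal J ∧ ∀ a ∈ J, ∃ b ∈ J, G.Adj a b

def IsPrimitiveCoideal (J : Set G.V) : Prop :=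
  G.IsSaturatedCoideal J ∧ ∀ J1 J2 : Set G.V, G.IsSaturatedCoideal J1 →
    G.IsSaturatedCoideal J2 → J = J1 ∪ J2 → J = J1 ∨ J = J2

/-- A harmonic function `φ : Γ → ℝ≥0 ∪ {+∞}`. -/
def Harmonic (φ : G.V → ℝ≥0∞) : Prop :=
  ∀ a, φ a = ∑ᶠ b, ENNReal.ofReal (G.k a b) * φ b

/-- The submodule of relations `λ = Σ_{μ : λ↗μ} κ(λ,μ)·μ` in the free module on vertices. -/
def relSub : Submodule ℝ (G.V →₀ ℝ) :=
  Submodule.span ℝ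
    {x | ∃ a : G.V, x = Finsupp.single a 1 - ∑ᶠ b, G.k a b • Finsupp.single b (1 : ℝ)}

/-- The group `K_0(Γ)`. -/
abbrev K0 := (G.V →₀ ℝ) ⧸ G.relSub

def toK0 : (G.V →₀ ℝ) →ₗ[ℝ] G.K0 := G.relSub.mkQ

/-- The class of a vertex in `K_0(Γ)`. -/
def vtx (a : G.V) : G.K0 := G.toK0 (Finsupp.single a 1)

/-- The positive cone `K_0^+(Γ)` generated by the vertices. -/
def cone : Set G.K0 := {x | ∃ c : G.V →₀ ℝ, (∀ a, 0 ≤ c a) ∧ x = G.toK0 c}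

/-- The partial order `x ≤_K y` defined by the cone. -/
def leK (x y : G.K0) : Prop := y - x ∈ G.cone

/-- The value of (the `ℝ≥0`-linear extension of) `φ` on a nonnegative element of the
free module on vertices. -/
def evalC (φ : G.V → ℝ≥0∞) (c : G.V →₀ ℝ) : ℝ≥0∞ :=
  ∑ a ∈ c.support, ENNReal.ofReal (c a) * φ a

/-- A semifinite harmonic function: it is harmonic, not everywhere finite, and its value
on any element of the cone is the supremum of its finite values on smaller cone elements
(stated on nonnegative representatives). -/
def Semifinite (φ : G.V → ℝ≥0∞) : Prop :=
  G.Harmonic φ ∧ (∃ a, φ a = ⊤) ∧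
    ∀ c : G.V →₀ ℝ, (∀ a, 0 ≤ c a) →
      G.evalC φ c = ⨆ d : {d : G.V →₀ ℝ //
        (∀ a, 0 ≤ d a) ∧ G.leK (G.toK0 d) (G.toK0 c) ∧ G.evalC φ d ≠ ⊤},
          G.evalC φ d.1

/-- A finite or semifinite harmonic function. -/
def FinOrSemifinite (φ : G.V → ℝ≥0∞) : Prop :=
  (G.Harmonic φ ∧ ∀ a, φ a ≠ ⊤) ∨ G.Semifinite φ

/-- An indecomposable (finite or semifinite, not identically zero) harmonic function:
any finite or semifinite harmonic `ψ ≤ φ` not vanishing identically on the finiteness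
ideal of `φ` is proportional to `φ` on the finiteness ideal of `φ`. -/
def Indecomposable (φ : G.V → ℝ≥0∞) : Prop :=
  G.FinOrSemifinite φ ∧ (∃ a, φ a ≠ 0) ∧
    ∀ ψ : G.V → ℝ≥0∞, G.FinOrSemifinite ψ → (∀ a, ψ a ≤ φ a) →
      (∃ a, φ a ≠ ⊤ ∧ ψ a ≠ 0) →
        ∃ C : ℝ≥0∞, ∀ a, φ a ≠ ⊤ → ψ a = C * φ a

end GradedGraph

structure BranchingGraph extends GradedGraph where
  root : V
  root_lvl : lvl root = 0
  root_unique : ∀ v, lvl v = 0 → v = root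
  exists_down : ∀ v, lvl v ≠ 0 → ∃ u, 0 < k u v

end

/-!
If `J` is directed and `J = J₁ ∪ J₂` with coideals `Jᵢ`, an upper bound in `J` of a point
outside `J₁` and a point outside `J₂` lies in one of the `Jᵢ`, which then contains that point.
Conversely, for `a ∈ J` let `K` be the set of points of `J` below some point of `J` above `a`.
Both `K` and the set of points of `J` below some point of `J \ K` are saturated coideals
covering `J`; the second one misses `a`, so primitivity forces `K = J`, which is directedness.
-/

namespace GradedGraph

variable {G : GradedGraph}

def lowerClosure (G : GradedGraph) (U : Set G.V) : Set G.V := {w | ∃ v ∈ U, G.Le w v}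

theorem subset_lowerClosure (U : Set G.V) : U ⊆ G.lowerClosure U :=
  fun v hv => ⟨v, hv, .refl⟩

theorem isCoideal_lowerClosure (U : Set G.V) : G.IsCoideal (G.lowerClosure U) :=
  fun _ ⟨v, hv, hwv⟩ _ huw => ⟨v, hv, huw.trans hwv⟩

theorem IsCoideal.lowerClosure_subset {J U : Set G.V} (hJ : G.IsCoideal J) (hUJ : U ⊆ J) :
    G.lowerClosure U ⊆ J :=
  fun w ⟨v, hv, hwv⟩ => hJ v (hUJ hv) w hwv

theorem IsSaturatedCoideal.lowerClosure {J U : Set G.V} (hJ : G.IsSaturatedCoideal J)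
    (hUJ : U ⊆ J) (hU : ∀ v ∈ U, ∀ u ∈ J, G.Adj v u → u ∈ U) :
    G.IsSaturatedCoideal (G.lowerClosure U) := by
  refine ⟨isCoideal_lowerClosure U, ?_⟩
  rintro w ⟨v, hv, hwv⟩
  rcases hwv.cases_head with rfl | ⟨u, hwu, huv⟩
  · obtain ⟨u, huJ, hwu⟩ := hJ.2 w (hUJ hv)
    exact ⟨u, subset_lowerClosure U (hU w hv u huJ hwu), hwu⟩
  · exact ⟨u, ⟨v, hv, huv⟩, hwu⟩

theorem IsPrimitiveCoideal.eq_of_forall_le_mem {J K : Set G.V} (hJ : G.IsPrimitiveCoideal J)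
    (hK : G.IsSaturatedCoideal K) (hKJ : K ⊆ J) {a : G.V} (ha : a ∈ K)
    (hup : ∀ c ∈ J, G.Le a c → c ∈ K) : K = J := by
  set L := G.lowerClosure (J \ K)
  have hL : G.IsSaturatedCoideal L := hJ.1.lowerClosure Set.sdiff_subset
    fun v hv u huJ hvu => ⟨huJ, fun huK => hv.2 (hK.1 u huK v (.single hvu))⟩
  have hJKL : J = K ∪ L := by
    refine Set.Subset.antisymm (fun v hv => ?_)
      (Set.union_subset hKJ (hJ.1.1.lowerClosure_subset Set.sdiff_subset))
    by_cases hvK : v ∈ K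
    · exact Or.inl hvK
    · exact Or.inr (subset_lowerClosure _ ⟨hv, hvK⟩)
  rcases hJ.2 K L hK hL hJKL with h | h
  · exact h.symm
  · obtain ⟨c, ⟨hcJ, hcK⟩, hac⟩ : a ∈ L := h ▸ hKJ ha
    exact absurd (hup c hcJ hac) hcK

theorem IsPrimitiveCoideal.directedOn {J : Set G.V} (hJ : G.IsPrimitiveCoideal J) :
    DirectedOn G.Le J := by
  intro a ha b hb
  set U := {c ∈ J | G.Le a c}
  have hK : G.IsSaturatedCoideal (G.lowerClosure U) :=
    hJ.1.lowerClosure (Set.sep_subset _ _) fun v hv u huJ hvu => ⟨huJ, hv.2.tail hvu⟩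
  have hKJ : G.lowerClosure U = J :=
    hJ.eq_of_forall_le_mem hK (hJ.1.1.lowerClosure_subset (Set.sep_subset _ _))
      (subset_lowerClosure U ⟨ha, .refl⟩) fun c hc hac => subset_lowerClosure U ⟨hc, hac⟩
  obtain ⟨c, ⟨hcJ, hac⟩, hbc⟩ : b ∈ G.lowerClosure U := hKJ ▸ hb
  exact ⟨c, hcJ, hac, hbc⟩

theorem IsCoideal.subset_or_subset_of_directedOn_union {J₁ J₂ : Set G.V}
    (h₁ : G.IsCoideal J₁) (h₂ : G.IsCoideal J₂) (hd : DirectedOn G.Le (J₁ ∪ J₂)) :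
    J₂ ⊆ J₁ ∨ J₁ ⊆ J₂ := by
  by_contra! h
  obtain ⟨⟨a, ha₂, ha₁⟩, ⟨b, hb₁, hb₂⟩⟩ := And.imp Set.not_subset.mp Set.not_subset.mp h
  obtain ⟨c, hc, hac, hbc⟩ := hd a (.inr ha₂) b (.inl hb₁)
  rcases hc with hc₁ | hc₂
  · exact ha₁ (h₁ c hc₁ a hac)
  · exact hb₂ (h₂ c hc₂ b hbc)

theorem IsSaturatedCoideal.isPrimitiveCoideal_of_directedOn {J : Set G.V}
    (hJ : G.IsSaturatedCoideal J) (hd : DirectedOn G.Le J) : G.IsPrimitiveCoideal J := by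
  refine ⟨hJ, fun J₁ J₂ h₁ h₂ hJ₁₂ => ?_⟩
  subst hJ₁₂
  rcases h₁.1.subset_or_subset_of_directedOn_union h₂.1 hd with h | h
  · exact .inl (Set.union_eq_left.mpr h)
  · exact .inr (Set.union_eq_right.mpr h)

end GradedGraph

/-- a saturated coideal is primitive iff it is upward directed. -/
theorem primitive_iff_directed (G : GradedGraph) (J : Set G.V)
    (hJ : G.IsSaturatedCoideal J) :
    G.IsPrimitiveCoideal J ↔ ∀ a ∈ J, ∀ b ∈ J, ∃ c ∈ J, G.Le a c ∧ G.Le b c :=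
  ⟨GradedGraph.IsPrimitiveCoideal.directedOn, hJ.isPrimitiveCoideal_of_directedOn⟩
end

section
/- Let ψ be a nonnegative real-valued subharmonic function on a graded graph Γ. Then for every vertex λ the sequence N ↦ Σ_{μ ∈ Γ_N} dim(λ,μ) ψ(μ) is non-decreasing in N (for N ≥ |λ|), and hence the limit c̄(λ) = lim_{N→∞} Σ_{μ ∈ Γ_N} dim(λ,μ)ψ(μ) exists in ℝ_{≥0}∪{+∞} and defines a harmonic function c̄ on Γ. -/
open Filter Topology ENNReal
open scoped Classical

/-! Expanding `dim(λ, μ)` over the predecessors of `μ` rewrites the level-`(N+1)` sum as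
`Σ_{|c| = N} dim(λ, c) Σ_μ κ(c, μ) ψ(μ)`, which dominates the level-`N` sum by subharmonicity.
Expanding `dim(λ, μ)` over the successors of `λ` instead shows that for `N > |λ|` the level-`N`
sums already satisfy the harmonicity equation; since `λ` has finitely many successors, the
equation passes to the monotone limit. -/

namespace GradedGraph

variable (G : GradedGraph)

noncomputable def levelFinset (n : ℕ) : Finset G.V := (G.levelFinite n).toFinset

@[simp]
lemma mem_levelFinset {n : ℕ} {v : G.V} : v ∈ G.levelFinset n ↔ G.lvl v = n :=
  Set.Finite.mem_toFinset _

lemma coe_levelFinset (n : ℕ) : (G.levelFinset n : Set G.V) = {v | G.lvl v = n} :=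
  Set.Finite.coe_toFinset _

lemma finsum_eq_sum_levelFinset {M : Type*} [AddCommMonoid M] (f : G.V → M) (n : ℕ)
    (hf : ∀ v, f v ≠ 0 → G.lvl v = n) : ∑ᶠ v, f v = ∑ v ∈ G.levelFinset n, f v :=
  finsum_eq_finsetSum_of_support_subset f fun v hv => by simpa using hf v hv

lemma finsum_k_mul (a : G.V) (f : G.V → ℝ) :
    ∑ᶠ b, G.k a b * f b = ∑ b ∈ G.levelFinset (G.lvl a + 1), G.k a b * f b :=
  G.finsum_eq_sum_levelFinset _ _ fun b hb => G.k_grade a b (left_ne_zero_of_mul hb)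

lemma finsum_ofReal_k_mul (a : G.V) (f : G.V → ℝ≥0∞) :
    ∑ᶠ b, ENNReal.ofReal (G.k a b) * f b =
      ∑ b ∈ G.levelFinset (G.lvl a + 1), ENNReal.ofReal (G.k a b) * f b :=
  G.finsum_eq_sum_levelFinset _ _ fun b hb =>
    G.k_grade a b fun h => hb (by rw [h, ENNReal.ofReal_zero, zero_mul])

lemma finsum_mul_k (b : G.V) (f : G.V → ℝ) :
    ∑ᶠ a, f a * G.k a b = ∑ a ∈ G.levelFinset (G.lvl b - 1), f a * G.k a b :=
  G.finsum_eq_sum_levelFinset _ _ fun a ha => by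
    have := G.k_grade a b (right_ne_zero_of_mul ha)
    omega

lemma dimAux_nonneg : ∀ (n : ℕ) (a b : G.V), 0 ≤ G.dimAux n a b
  | 0, a, b => by unfold dimAux; positivity
  | n + 1, a, b =>
    finsum_nonneg fun c => mul_nonneg (dimAux_nonneg n a c) (G.k_nonneg c b)

lemma dim_nonneg (a b : G.V) : 0 ≤ G.dim a b := G.dimAux_nonneg _ a b

lemma dimAux_succ_left :
    ∀ (n : ℕ) (a b : G.V), G.dimAux (n + 1) a b = ∑ᶠ c, G.k a c * G.dimAux n c b
  | 0, a, b => by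
    rw [dimAux.eq_2, finsum_eq_single _ a fun c hc => by simp [dimAux, Ne.symm hc],
      finsum_eq_single _ b fun c hc => by simp [dimAux, hc]]
    simp [dimAux]
  | n + 1, a, b =>
    calc G.dimAux (n + 2) a b
        = ∑ c ∈ G.levelFinset (G.lvl b - 1),
            (∑ d ∈ G.levelFinset (G.lvl a + 1), G.k a d * G.dimAux n d c) * G.k c b := by
          rw [dimAux.eq_2, finsum_mul_k]
          simp only [dimAux_succ_left n, finsum_k_mul]
      _ = ∑ d ∈ G.levelFinset (G.lvl a + 1),
            G.k a d * ∑ c ∈ G.levelFinset (G.lvl b - 1), G.dimAux n d c * G.k c b := by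
          simp only [Finset.sum_mul, Finset.mul_sum, mul_assoc]
          exact Finset.sum_comm
      _ = ∑ᶠ d, G.k a d * G.dimAux (n + 1) d b := by
          simp only [dimAux.eq_2, finsum_mul_k, finsum_k_mul]

lemma dim_eq_zero_of_lvl_lt {a b : G.V} (h : G.lvl b < G.lvl a) : G.dim a b = 0 := by
  rw [dim, show G.lvl b - G.lvl a = 0 by omega, dimAux, if_neg]
  rintro rfl
  exact lt_irrefl _ h

lemma dim_eq_finsum_mul_k {a b : G.V} (h : G.lvl a < G.lvl b) :
    G.dim a b = ∑ᶠ c, G.dim a c * G.k c b := by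
  obtain ⟨n, hn⟩ : ∃ n, G.lvl b - G.lvl a = n + 1 := ⟨G.lvl b - G.lvl a - 1, by omega⟩
  rw [dim, hn, dimAux.eq_2]
  refine finsum_congr fun c => ?_
  rcases eq_or_ne (G.k c b) 0 with hcb | hcb
  · simp [hcb]
  · have := G.k_grade c b hcb
    rw [dim, show G.lvl c - G.lvl a = n by omega]

lemma dim_eq_finsum_k_mul {a b : G.V} (h : G.lvl a < G.lvl b) :
    G.dim a b = ∑ᶠ c, G.k a c * G.dim c b := by
  obtain ⟨n, hn⟩ : ∃ n, G.lvl b - G.lvl a = n + 1 := ⟨G.lvl b - G.lvl a - 1, by omega⟩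
  rw [dim, hn, dimAux_succ_left]
  refine finsum_congr fun c => ?_
  rcases eq_or_ne (G.k a c) 0 with hac | hac
  · simp [hac]
  · have := G.k_grade a c hac
    rw [dim, show G.lvl b - G.lvl c = n by omega]

noncomputable def dimSum (ψ : G.V → ℝ) (a : G.V) (N : ℕ) : ℝ :=
  ∑ μ ∈ G.levelFinset N, G.dim a μ * ψ μ

variable {G}

lemma dimSum_nonneg {ψ : G.V → ℝ} (hψ : ∀ a, 0 ≤ ψ a) (a : G.V) (N : ℕ) :
    0 ≤ G.dimSum ψ a N :=
  Finset.sum_nonneg fun μ _ => mul_nonneg (G.dim_nonneg a μ) (hψ μ)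

lemma dimSum_eq_zero_of_lt (ψ : G.V → ℝ) {a : G.V} {N : ℕ} (h : N < G.lvl a) :
    G.dimSum ψ a N = 0 :=
  Finset.sum_eq_zero fun μ hμ => by
    rw [G.dim_eq_zero_of_lvl_lt (by simpa [(G.mem_levelFinset).1 hμ] using h), zero_mul]

lemma dimSum_succ (ψ : G.V → ℝ) {a : G.V} {N : ℕ} (h : G.lvl a ≤ N) :
    G.dimSum ψ a (N + 1) = ∑ c ∈ G.levelFinset N, G.dim a c * ∑ᶠ μ, G.k c μ * ψ μ :=
  calc G.dimSum ψ a (N + 1)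
      = ∑ μ ∈ G.levelFinset (N + 1), ∑ c ∈ G.levelFinset N, G.dim a c * (G.k c μ * ψ μ) :=
        Finset.sum_congr rfl fun μ hμ => by
          rw [G.mem_levelFinset] at hμ
          rw [G.dim_eq_finsum_mul_k (by omega), G.finsum_mul_k, hμ, Nat.add_sub_cancel,
            Finset.sum_mul]
          simp only [mul_assoc]
    _ = ∑ c ∈ G.levelFinset N, G.dim a c * ∑ μ ∈ G.levelFinset (N + 1), G.k c μ * ψ μ := by
        rw [Finset.sum_comm]
        simp only [Finset.mul_sum]
    _ = ∑ c ∈ G.levelFinset N, G.dim a c * ∑ᶠ μ, G.k c μ * ψ μ :=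
        Finset.sum_congr rfl fun c hc => by rw [G.finsum_k_mul, (G.mem_levelFinset).1 hc]

lemma monotone_dimSum {ψ : G.V → ℝ} (hψ : ∀ a, 0 ≤ ψ a)
    (hsub : ∀ a, ψ a ≤ ∑ᶠ b, G.k a b * ψ b) (a : G.V) : Monotone (G.dimSum ψ a) := by
  refine monotone_nat_of_le_succ fun N => ?_
  rcases le_or_gt (G.lvl a) N with h | h
  · rw [dimSum_succ ψ h]
    exact Finset.sum_le_sum fun c _ => mul_le_mul_of_nonneg_left (hsub c) (G.dim_nonneg a c)
  · rw [dimSum_eq_zero_of_lt ψ h]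
    exact dimSum_nonneg hψ a (N + 1)

lemma dimSum_eq_finsum_k_mul (ψ : G.V → ℝ) {a : G.V} {N : ℕ} (h : G.lvl a < N) :
    G.dimSum ψ a N = ∑ᶠ b, G.k a b * G.dimSum ψ b N := by
  rw [G.finsum_k_mul]
  calc G.dimSum ψ a N
      = ∑ μ ∈ G.levelFinset N, ∑ b ∈ G.levelFinset (G.lvl a + 1),
          G.k a b * (G.dim b μ * ψ μ) :=
        Finset.sum_congr rfl fun μ hμ => by
          rw [G.mem_levelFinset] at hμ
          rw [G.dim_eq_finsum_k_mul (by omega), G.finsum_k_mul, Finset.sum_mul]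
          simp only [mul_assoc]
    _ = ∑ b ∈ G.levelFinset (G.lvl a + 1), G.k a b * G.dimSum ψ b N := by
        rw [Finset.sum_comm]
        simp only [dimSum, Finset.mul_sum]

lemma ofReal_dimSum {ψ : G.V → ℝ} (hψ : ∀ a, 0 ≤ ψ a) (a : G.V) (N : ℕ) :
    ENNReal.ofReal (G.dimSum ψ a N) =
      ∑ᶠ μ ∈ {μ : G.V | G.lvl μ = N}, ENNReal.ofReal (G.dim a μ * ψ μ) := by
  rw [← G.coe_levelFinset, finsum_mem_coe_finset, dimSum,
    ENNReal.ofReal_sum_of_nonneg fun μ _ => mul_nonneg (G.dim_nonneg a μ) (hψ μ)]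

lemma ofReal_dimSum_eq_finsum {ψ : G.V → ℝ} (hψ : ∀ a, 0 ≤ ψ a) {a : G.V} {N : ℕ}
    (h : G.lvl a < N) :
    ENNReal.ofReal (G.dimSum ψ a N) =
      ∑ᶠ b, ENNReal.ofReal (G.k a b) * ENNReal.ofReal (G.dimSum ψ b N) := by
  rw [dimSum_eq_finsum_k_mul ψ h, G.finsum_k_mul, G.finsum_ofReal_k_mul,
    ENNReal.ofReal_sum_of_nonneg fun b _ => mul_nonneg (G.k_nonneg a b) (dimSum_nonneg hψ b N)]
  exact Finset.sum_congr rfl fun b _ => ENNReal.ofReal_mul (G.k_nonneg a b)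

lemma harmonic_of_tendsto {F : G.V → ℕ → ℝ≥0∞} {φ : G.V → ℝ≥0∞}
    (hF : ∀ a, Tendsto (F a) atTop (𝓝 (φ a)))
    (hharm : ∀ a, ∀ᶠ N in atTop, F a N = ∑ᶠ b, ENNReal.ofReal (G.k a b) * F b N) :
    G.Harmonic φ := by
  intro a
  rw [G.finsum_ofReal_k_mul]
  refine tendsto_nhds_unique (hF a) ((tendsto_finsetSum _ fun b _ =>
    ENNReal.Tendsto.const_mul (hF b) (Or.inr ENNReal.ofReal_ne_top)).congr' ?_)
  filter_upwards [hharm a] with N hN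
  rw [hN, G.finsum_ofReal_k_mul]

end GradedGraph

/-- for a nonnegative real subharmonic `ψ`, the sums
`N ↦ Σ_{|μ|=N} dim(λ,μ)ψ(μ)` are non-decreasing (for `N ≥ |λ|`), and the limit exists
and defines a harmonic function. -/
theorem subharmonic_limit_harmonic (G : GradedGraph) (ψ : G.V → ℝ)
    (hψ0 : ∀ a, 0 ≤ ψ a)
    (hsub : ∀ a, ψ a ≤ ∑ᶠ b, G.k a b * ψ b) :
    (∀ (lam : G.V) (N M : ℕ), G.lvl lam ≤ N → N ≤ M →
        (∑ᶠ μ ∈ {μ : G.V | G.lvl μ = N}, ENNReal.ofReal (G.dim lam μ * ψ μ)) ≤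
          ∑ᶠ μ ∈ {μ : G.V | G.lvl μ = M}, ENNReal.ofReal (G.dim lam μ * ψ μ)) ∧
      ∃ cbar : G.V → ℝ≥0∞, G.Harmonic cbar ∧ ∀ lam : G.V,
        Tendsto (fun N => ∑ᶠ μ ∈ {μ : G.V | G.lvl μ = N},
          ENNReal.ofReal (G.dim lam μ * ψ μ)) atTop (𝓝 (cbar lam)) := by
  have hmono : ∀ a, Monotone fun N => ENNReal.ofReal (G.dimSum ψ a N) := fun a =>
    ENNReal.ofReal_mono.comp (GradedGraph.monotone_dimSum hψ0 hsub a)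
  have htend : ∀ a, Tendsto (fun N => ENNReal.ofReal (G.dimSum ψ a N)) atTop
      (𝓝 (⨆ N, ENNReal.ofReal (G.dimSum ψ a N))) := fun a => tendsto_atTop_iSup (hmono a)
  simp only [← GradedGraph.ofReal_dimSum hψ0]
  refine ⟨fun a N M _ hNM => hmono a hNM, _, ?_, htend⟩
  exact GradedGraph.harmonic_of_tendsto htend fun a =>
    Filter.eventually_gt_atTop (G.lvl a) |>.mono fun N hN =>
      GradedGraph.ofReal_dimSum_eq_finsum hψ0 hN
end

section
/- If φ is a semifinite harmonic function on a graded graph Γ, then for every vertex λ with φ(λ) = +∞ there exists a vertex μ ≥ λ with 0 < φ(μ) < +∞. -/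
open Filter Topology ENNReal
open scoped Classical

/-!
Suppose every `μ ≥ λ` has `φ μ ∈ {0, ⊤}`. Semifiniteness at `λ` gives `d ≤_K λ` with
`0 < φ(d) < ⊤`, so `λ - d - e` is a relation for some `e ≥ 0`, and `d` charges a vertex `a`
with `0 < φ a < ⊤`. Cut `φ` off at a high level `N`: the real function `f` that is harmonic
below `N` with boundary values `(φ ·).toReal` kills that relation, is nonnegative, equals
`(φ a).toReal > 0` at `a`, and vanishes at `λ`. Then `0 = f λ - f d - f e < 0`.
-/

namespace Finsupp

variable {α R : Type*} [Semiring R] [PartialOrder R] [IsOrderedRing R] {v : α → R} {c : α →₀ R}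

theorem linearCombination_nonneg (hc : ∀ a, 0 ≤ c a) (hv : ∀ a, 0 ≤ v a) :
    0 ≤ linearCombination R v c := by
  rw [linearCombination_apply]
  exact Finset.sum_nonneg fun a _ => mul_nonneg (hc a) (hv a)

theorem apply_mul_le_linearCombination (hc : ∀ a, 0 ≤ c a) (hv : ∀ a, 0 ≤ v a) (a : α) :
    c a * v a ≤ linearCombination R v c := by
  by_cases ha : a ∈ c.support
  · rw [linearCombination_apply]
    exact Finset.single_le_sum (f := fun a => c a • v a)
      (fun b _ => mul_nonneg (hc b) (hv b)) ha
  · rw [notMem_support_iff.1 ha, zero_mul]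
    exact linearCombination_nonneg hc hv

end Finsupp

namespace GradedGraph

variable {G : GradedGraph}

theorem support_k_finite (a : G.V) : (Function.support (G.k a)).Finite :=
  (G.levelFinite (G.lvl a + 1)).subset fun b hb => G.k_grade a b hb

noncomputable def next (a : G.V) : Finset G.V := (support_k_finite a).toFinset

theorem mem_next {a b : G.V} : b ∈ next a ↔ G.k a b ≠ 0 := by
  simp [next]

theorem Harmonic.eq_sum_next {φ : G.V → ℝ≥0∞} (hφ : G.Harmonic φ) (a : G.V) :
    φ a = ∑ b ∈ next a, ENNReal.ofReal (G.k a b) * φ b := by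
  refine (hφ a).trans (finsum_eq_sum_of_support_subset _ fun b hb => ?_)
  rw [Finset.mem_coe, mem_next]
  rintro hk
  simp [hk] at hb

theorem finsum_k_smul_single (a : G.V) :
    ∑ᶠ b, G.k a b • Finsupp.single b (1 : ℝ) = ∑ b ∈ next a, G.k a b • Finsupp.single b 1 := by
  refine finsum_eq_sum_of_support_subset _ fun b hb => ?_
  rw [Finset.mem_coe, mem_next]
  rintro hk
  simp [hk] at hb

theorem eventually_linearCombination_eq_zero_of_mem_relSub {f : ℕ → G.V → ℝ}
    (hf : ∀ N a, G.lvl a < N → f N a = ∑ b ∈ next a, G.k a b * f N b)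
    {r : G.V →₀ ℝ} (hr : r ∈ G.relSub) :
    ∀ᶠ N in atTop, Finsupp.linearCombination ℝ (f N) r = 0 := by
  induction hr using Submodule.span_induction with
  | mem x hx =>
    obtain ⟨a, rfl⟩ := hx
    filter_upwards [eventually_gt_atTop (G.lvl a)] with N hN
    rw [finsum_k_smul_single, map_sub, map_sum, Finsupp.linearCombination_single, one_smul,
      hf N a hN, sub_eq_zero]
    refine Finset.sum_congr rfl fun b _ => ?_
    rw [map_smul, Finsupp.linearCombination_single, one_smul, smul_eq_mul]
  | zero => simp
  | add x y _ _ hx hy =>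
    filter_upwards [hx, hy] with N hxN hyN
    rw [map_add, hxN, hyN, add_zero]
  | smul c x _ hx =>
    filter_upwards [hx] with N hxN
    rw [map_smul, hxN, smul_zero]

noncomputable def extendAux (φ : G.V → ℝ≥0∞) : ℕ → G.V → ℝ
  | 0, v => (φ v).toReal
  | m + 1, v => ∑ b ∈ next v, G.k v b * extendAux φ m b

/-- The real function that is harmonic below level `N` and equals `(φ ·).toReal` from level `N`
on. -/
noncomputable def extendFromLevel (φ : G.V → ℝ≥0∞) (N : ℕ) (v : G.V) : ℝ :=
  extendAux φ (N - G.lvl v) v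

theorem extendAux_nonneg (φ : G.V → ℝ≥0∞) : ∀ m v, 0 ≤ extendAux φ m v
  | 0, _ => ENNReal.toReal_nonneg
  | m + 1, v => Finset.sum_nonneg fun b _ =>
      mul_nonneg (G.k_nonneg v b) (extendAux_nonneg φ m b)

theorem extendFromLevel_eq_sum_next (φ : G.V → ℝ≥0∞) {N : ℕ} {a : G.V} (hN : G.lvl a < N) :
    extendFromLevel φ N a = ∑ b ∈ next a, G.k a b * extendFromLevel φ N b := by
  obtain ⟨m, hm⟩ : ∃ m, N - G.lvl a = m + 1 := ⟨N - G.lvl a - 1, by omega⟩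
  rw [extendFromLevel, hm, extendAux]
  refine Finset.sum_congr rfl fun b hb => ?_
  rw [extendFromLevel, G.k_grade a b (mem_next.1 hb)]
  congr 2
  omega

theorem Harmonic.ne_top_of_mem_next {φ : G.V → ℝ≥0∞} (hφ : G.Harmonic φ) {a b : G.V}
    (ha : φ a ≠ ⊤) (hb : b ∈ next a) : φ b ≠ ⊤ := by
  intro hb_top
  have hk : ENNReal.ofReal (G.k a b) ≠ 0 := by
    simpa using (G.k_nonneg a b).lt_of_ne' (mem_next.1 hb)
  have hle := Finset.single_le_sum (f := fun b => ENNReal.ofReal (G.k a b) * φ b)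
    (fun _ _ => zero_le) hb
  rw [← hφ.eq_sum_next, hb_top, ENNReal.mul_top hk, top_le_iff] at hle
  exact ha hle

theorem extendAux_eq_toReal {φ : G.V → ℝ≥0∞} (hφ : G.Harmonic φ) :
    ∀ m {a}, φ a ≠ ⊤ → extendAux φ m a = (φ a).toReal
  | 0, _, _ => rfl
  | m + 1, a, ha => by
    rw [extendAux, hφ.eq_sum_next a, ENNReal.toReal_sum fun b hb =>
      ENNReal.mul_ne_top ENNReal.ofReal_ne_top (hφ.ne_top_of_mem_next ha hb)]
    refine Finset.sum_congr rfl fun b hb => ?_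
    rw [extendAux_eq_toReal hφ m (hφ.ne_top_of_mem_next ha hb), ENNReal.toReal_mul,
      ENNReal.toReal_ofReal (G.k_nonneg a b)]

theorem extendAux_eq_zero {φ : G.V → ℝ≥0∞} :
    ∀ m {a}, (∀ μ, G.Le a μ → (φ μ).toReal = 0) → extendAux φ m a = 0
  | 0, _, h => h _ .refl
  | m + 1, a, h => Finset.sum_eq_zero fun b hb => by
    rw [extendAux_eq_zero m fun μ hμ => h μ (.head ((G.k_nonneg a b).lt_of_ne'
      (mem_next.1 hb)) hμ), mul_zero]

theorem exists_pos_ne_zero_ne_top_of_evalC {φ : G.V → ℝ≥0∞} {d : G.V →₀ ℝ}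
    (h0 : G.evalC φ d ≠ 0) (htop : G.evalC φ d ≠ ⊤) :
    ∃ a, 0 < d a ∧ φ a ≠ 0 ∧ φ a ≠ ⊤ := by
  obtain ⟨a, ha, hne⟩ := Finset.exists_ne_zero_of_sum_ne_zero h0
  have hda : ENNReal.ofReal (d a) ≠ 0 := left_ne_zero_of_mul hne
  refine ⟨a, by simpa using hda, right_ne_zero_of_mul hne, fun h => htop ?_⟩
  have hle := Finset.single_le_sum (f := fun a => ENNReal.ofReal (d a) * φ a)
    (fun _ _ => zero_le) ha
  rwa [h, ENNReal.mul_top hda, top_le_iff] at hle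

theorem evalC_single_one (φ : G.V → ℝ≥0∞) (a : G.V) :
    G.evalC φ (Finsupp.single a 1) = φ a := by
  simp [evalC]

theorem Semifinite.exists_leK_vtx_evalC_ne_zero_ne_top {φ : G.V → ℝ≥0∞}
    (hφ : G.Semifinite φ) {a : G.V} (ha : φ a = ⊤) :
    ∃ d : G.V →₀ ℝ, (∀ v, 0 ≤ d v) ∧ G.leK (G.toK0 d) (G.vtx a) ∧
      G.evalC φ d ≠ 0 ∧ G.evalC φ d ≠ ⊤ := by
  have hsup := hφ.2.2 (Finsupp.single a 1) fun v => by
    rw [Finsupp.single_apply]; split_ifs <;> norm_num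
  rw [evalC_single_one, ha, eq_comm, iSup_eq_top] at hsup
  obtain ⟨⟨d, hd0, hdle, hdtop⟩, hpos⟩ := hsup 0 ENNReal.zero_lt_top
  exact ⟨d, hd0, hdle, hpos.ne', hdtop⟩

theorem exists_sub_sub_mem_relSub_of_leK {c d : G.V →₀ ℝ} (h : G.leK (G.toK0 d) (G.toK0 c)) :
    ∃ e : G.V →₀ ℝ, (∀ v, 0 ≤ e v) ∧ c - d - e ∈ G.relSub := by
  obtain ⟨e, he0, he⟩ := h
  refine ⟨e, he0, (Submodule.Quotient.mk_eq_zero _).1 ?_⟩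
  change G.toK0 (c - d - e) = 0
  rw [map_sub, map_sub, ← he, sub_self]

end GradedGraph

/-- if `φ` is semifinite and `φ(λ) = +∞`, then some `μ ≥ λ` has
`0 < φ(μ) < +∞`. -/
theorem semifinite_exists_finite_majorant (G : GradedGraph) (φ : G.V → ℝ≥0∞)
    (hφ : G.Semifinite φ) (lam : G.V) (hlam : φ lam = ⊤) :
    ∃ μ, G.Le lam μ ∧ φ μ ≠ 0 ∧ φ μ ≠ ⊤ := by
  open GradedGraph in
  by_contra! hcon
  obtain ⟨d, hd0, hdle, hd_ne_zero, hd_ne_top⟩ := hφ.exists_leK_vtx_evalC_ne_zero_ne_top hlam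
  obtain ⟨a, hda, hφa0, hφa_top⟩ := exists_pos_ne_zero_ne_top_of_evalC hd_ne_zero hd_ne_top
  obtain ⟨e, he0, hrel⟩ := exists_sub_sub_mem_relSub_of_leK hdle
  obtain ⟨N, hN⟩ := (eventually_linearCombination_eq_zero_of_mem_relSub
    (fun _ _ => extendFromLevel_eq_sum_next φ) hrel).exists
  set f := extendFromLevel φ N
  have hf_nonneg (v : G.V) : 0 ≤ f v := extendAux_nonneg φ _ v
  have hf_lam : f lam = 0 := extendAux_eq_zero _ fun μ hμ =>
    (ENNReal.toReal_eq_zero_iff _).2 (or_iff_not_imp_left.2 (hcon μ hμ))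
  have hf_a : f a = (φ a).toReal := extendAux_eq_toReal hφ.1 _ hφa_top
  have hLd := Finsupp.apply_mul_le_linearCombination hd0 hf_nonneg a
  have hLe := Finsupp.linearCombination_nonneg he0 hf_nonneg
  rw [map_sub, map_sub, Finsupp.linearCombination_single, hf_lam, smul_zero] at hN
  nlinarith [mul_pos hda (hf_a ▸ ENNReal.toReal_pos hφa0 hφa_top)]
end
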